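/- For the map f(x) = cot²(x), the absolute value of the derivative satisfies |f'(x)| = |2·cos(x)/sin³(x)| > 1 for all x ∈ (0, π/4]. -/
import Mathlib


open Real

/-- |f'(x)| = |2 cos x / sin³ x| > 1 for all x ∈ (0, π/4]. -/
theorem stmt4 : ∀ x : ℝ, 0 < x → x ≤ π / 4 → 1 < |2 * cos x / (sin x) ^ 3| := by
  intro x hx hx4
  have hπ : x < π / 2 := lt_of_le_of_lt hx4 (by linarith [pi_pos])
  have hs : 0 < sin x := sin_pos_of_pos_of_lt_pi hx (by linarith [pi_pos])
  have hc : 0 < cos x := cos_pos_of_mem_Ioo ⟨by linarith [pi_pos], hπ⟩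
  have hs1 : sin x ≤ 1 := sin_le_one x
  have hsc : sin x ≤ cos x := by
    have h1 : sin x ≤ sin (π / 4) := by
      apply sin_le_sin_of_le_of_le_pi_div_two (by linarith [pi_pos]) (by linarith [pi_pos]) hx4
    have h2 : cos (π / 4) ≤ cos x := by
      apply cos_le_cos_of_nonneg_of_le_pi (le_of_lt hx) (by linarith [pi_pos]) hx4
    calc sin x ≤ sin (π / 4) := h1
      _ = cos (π / 4) := by rw [sin_pi_div_four, cos_pi_div_four]
      _ ≤ cos x := h2
  have hcube : sin x ^ 3 < 2 * cos x := by
    nlinarith [sq_nonneg (sin x), sq_nonneg (1 - sin x)]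
  have hpos : 0 < 2 * cos x / sin x ^ 3 := by positivity
  rw [abs_of_pos hpos, lt_div_iff₀ (by positivity)]
  linarith
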